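/- arXiv:1710.07527 — 2 statements merged into one kernel-verified Lean document; each statement's English description precedes it below -/
import Mathlib

section
/- Let G be a graph of order n with D(G) = d. If Det(G) ≤ ρ_d(G), then Det(G) ≤ n/2. -/
/-!
Fix a `D(G)`-distinguishing labeling and one of its label classes `C`. An automorphism fixing
every vertex outside `C` maps `C` onto itself, hence preserves the labeling and is trivial; so
the complement of `C` is determining and `Det(G) ≤ n - |C|`. Choosing `C` of size `ρ_d(G)` gives
`Det(G) + ρ_d(G) ≤ n`, and with `Det(G) ≤ ρ_d(G)` this is `2 Det(G) ≤ n`.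
-/

open SimpleGraph

/-- A labeling `f : V → Fin d` is `d`-distinguishing if the only automorphism
preserving all labels is the identity. -/
def IsDistinguishing {V : Type*} (G : SimpleGraph V) (d : ℕ) (f : V → Fin d) : Prop :=
  ∀ φ : G ≃g G, (∀ v, f (φ v) = f v) → ∀ v, φ v = v

/-- The distinguishing number `D(G)`. -/
noncomputable def distNum {V : Type*} (G : SimpleGraph V) : ℕ :=
  sInf {d | ∃ f : V → Fin d, IsDistinguishing G d f}

/-- The cost `ρ_d(G)`: the minimum size of a label class in a
`d`-distinguishing labeling of `G`. -/
noncomputable def cost {V : Type*} (G : SimpleGraph V) [Fintype V] (d : ℕ) : ℕ :=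
  sInf {k | ∃ (f : V → Fin d) (i : Fin d), IsDistinguishing G d f ∧
    k = (Finset.univ.filter (fun v => f v = i)).card}

/-- `S` is a determining set for `G` if automorphisms agreeing on `S` agree everywhere. -/
def IsDeterminingSet {V : Type*} (G : SimpleGraph V) (S : Set V) : Prop :=
  ∀ φ ψ : G ≃g G, (∀ v ∈ S, φ v = ψ v) → ∀ v, φ v = ψ v

/-- The determining number `Det(G)`. -/
noncomputable def detNum {V : Type*} (G : SimpleGraph V) [Fintype V] : ℕ :=
  sInf {k | ∃ S : Finset V, IsDeterminingSet G ↑S ∧ S.card = k}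


section

variable {V : Type*} (G : SimpleGraph V)

theorem exists_isDistinguishing_distNum [Fintype V] :
    ∃ f : V → Fin (distNum G), IsDistinguishing G (distNum G) f :=
  Nat.sInf_mem (s := {d | ∃ f : V → Fin d, IsDistinguishing G d f})
    ⟨_, Fintype.equivFin V, fun _ hφ v => (Fintype.equivFin V).injective (hφ v)⟩

theorem detNum_le_card [Fintype V] : detNum G ≤ Fintype.card V :=
  Nat.sInf_le ⟨Finset.univ, fun _ _ h v => h v (Finset.mem_coe.2 (Finset.mem_univ v)), rfl⟩

namespace IsDistinguishing

variable {G} {d : ℕ} {f : V → Fin d}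

theorem isDeterminingSet_compl_labelClass (hf : IsDistinguishing G d f) (i : Fin d) :
    IsDeterminingSet G {v | f v ≠ i} := by
  intro φ ψ hagree v
  set σ : G ≃g G := φ.trans ψ.symm
  have hfix : ∀ w, f w ≠ i → σ w = w := fun w hw =>
    (ψ.symm_apply_eq).2 (hagree w hw)
  have hpres : ∀ w, f (σ w) = f w := by
    intro w
    by_cases hw : f w = i
    · by_cases hσw : f (σ w) = i
      · rw [hσw, hw]
      · rw [σ.injective (hfix _ hσw)]
    · rw [hfix w hw]
  exact (ψ.symm_apply_eq).1 (hf σ hpres v)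

theorem detNum_add_cost_le [Fintype V] [Nonempty V] (hf : IsDistinguishing G d f) :
    detNum G + cost G d ≤ Fintype.card V := by
  classical
  let i := f (Classical.arbitrary V)
  have hdet : detNum G ≤ (Finset.univ.filter fun v => ¬f v = i).card :=
    Nat.sInf_le ⟨_, by simpa using hf.isDeterminingSet_compl_labelClass i, rfl⟩
  have hcost : cost G d ≤ (Finset.univ.filter (f · = i)).card :=
    Nat.sInf_le ⟨f, i, hf, rfl⟩
  have hsplit := Finset.card_filter_add_card_filter_not
    (s := Finset.univ) (fun v => f v = i)
  rw [Finset.card_univ] at hsplit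
  omega

end IsDistinguishing

end

theorem stmt_6 {V : Type*} [Fintype V] (G : SimpleGraph V) (n d : ℕ)
    (hn : Fintype.card V = n) (hd : distNum G = d)
    (h : detNum G ≤ cost G d) :
    (detNum G : ℝ) ≤ (n : ℝ) / 2 := by
  subst hn hd
  have key : 2 * detNum G ≤ Fintype.card V := by
    rcases isEmpty_or_nonempty V with _ | _
    · simpa using detNum_le_card G
    · obtain ⟨f, hf⟩ := exists_isDistinguishing_distNum G
      have := hf.detNum_add_cost_le
      omega
  rw [le_div_iff₀ two_pos]
  exact_mod_cast (mul_comm _ 2).trans_le key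
end

section
/- For any n ≥ 2, the determining number of the friendship graph F_n equals n. -/
open SimpleGraph

/-- The friendship graph `F n`: `n` triangles sharing the common central vertex `none`. -/
def friendshipGraph (n : ℕ) : SimpleGraph (Option (Fin n × Fin 2)) :=
  SimpleGraph.fromRel (fun u v =>
    u = none ∨ ∃ (i : Fin n) (a b : Fin 2), u = some (i, a) ∧ v = some (i, b))

/-!
For `n ≥ 2` the centre is the only vertex adjacent to all others, so every automorphism fixes
it; an automorphism fixing one outer vertex of a triangle then fixes the other one, its only
neighbour besides the centre. Conversely, swapping the two outer vertices of a single triangle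
is an automorphism moving nothing else, so a determining set contains an outer vertex of every
triangle.
-/

section DeterminingSet

variable {V : Type*} {G : SimpleGraph V} {S : Set V}

theorem isDeterminingSet_iff_forall_fixes :
    IsDeterminingSet G S ↔ ∀ φ : G ≃g G, (∀ v ∈ S, φ v = v) → ∀ v, φ v = v := by
  refine ⟨fun hS φ hφ => hS φ (RelIso.refl _) hφ, fun h φ ψ hφψ v => ?_⟩
  have hfix : ∀ v, ψ.symm (φ v) = v :=
    h (φ.trans ψ.symm) fun v hv => by simp [hφψ v hv]
  exact ψ.symm_apply_eq.1 (hfix v)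

theorem IsDeterminingSet.exists_mem_apply_ne (hS : IsDeterminingSet G S) (φ : G ≃g G)
    (hφ : ∃ v, φ v ≠ v) : ∃ v ∈ S, φ v ≠ v := by
  contrapose! hφ
  exact isDeterminingSet_iff_forall_fixes.1 hS φ hφ

theorem detNum_eq_of_isLeast [Fintype V] {k : ℕ}
    (h : IsLeast {k | ∃ S : Finset V, IsDeterminingSet G ↑S ∧ S.card = k} k) :
    detNum G = k :=
  h.csInf_eq

end DeterminingSet

namespace friendshipGraph

variable {n : ℕ}

@[simp]
theorem adj_none_left (v : Option (Fin n × Fin 2)) :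
    (friendshipGraph n).Adj none v ↔ v ≠ none := by
  simp [friendshipGraph, eq_comm]

@[simp]
theorem adj_none_right (v : Option (Fin n × Fin 2)) :
    (friendshipGraph n).Adj v none ↔ v ≠ none := by
  rw [adj_comm, adj_none_left]

@[simp]
theorem adj_some_some (x y : Fin n × Fin 2) :
    (friendshipGraph n).Adj (some x) (some y) ↔ x.1 = y.1 ∧ x ≠ y := by
  obtain ⟨i, a⟩ := x
  obtain ⟨j, b⟩ := y
  simp only [friendshipGraph, fromRel_adj, ne_eq, Option.some.injEq, reduceCtorEq, false_or,
    Prod.mk.injEq]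
  constructor
  · rintro ⟨hne, ⟨_, _, _, ⟨rfl, rfl⟩, rfl, rfl⟩ | ⟨_, _, _, ⟨rfl, rfl⟩, rfl, rfl⟩⟩ <;>
    exact ⟨rfl, hne⟩
  · rintro ⟨rfl, hne⟩
    exact ⟨hne, Or.inl ⟨i, a, b, ⟨rfl, rfl⟩, rfl, rfl⟩⟩

def autOfFstEq (e : Equiv.Perm (Fin n × Fin 2)) (he : ∀ x, (e x).1 = x.1) :
    friendshipGraph n ≃g friendshipGraph n where
  toEquiv := Equiv.optionCongr e
  map_rel_iff' {u v} := by
    rcases u with _ | x <;> rcases v with _ | y <;> simp [he, e.injective.eq_iff]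

@[simp]
theorem autOfFstEq_apply (e : Equiv.Perm (Fin n × Fin 2)) (he : ∀ x, (e x).1 = x.1)
    (v : Option (Fin n × Fin 2)) : autOfFstEq e he v = v.map e :=
  rfl

def swapTriangle (i : Fin n) : friendshipGraph n ≃g friendshipGraph n :=
  autOfFstEq (Equiv.Perm.prodExtendRight i (Equiv.swap 0 1)) (Equiv.Perm.fst_prodExtendRight _ _)

theorem swapTriangle_apply_of_ne {i j : Fin n} (h : j ≠ i) (a : Fin 2) :
    swapTriangle i (some (j, a)) = some (j, a) := by
  simp [swapTriangle, Equiv.Perm.prodExtendRight_apply_ne _ h]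

theorem swapTriangle_apply_zero (i : Fin n) : swapTriangle i (some (i, 0)) = some (i, 1) := by
  simp [swapTriangle, Equiv.Perm.prodExtendRight_apply_eq]

theorem map_none (hn : 2 ≤ n) (φ : friendshipGraph n ≃g friendshipGraph n) :
    φ none = none := by
  have hcenter : ∀ v, v ≠ φ none → (friendshipGraph n).Adj (φ none) v := fun v hv => by
    rw [← φ.apply_symm_apply v, φ.map_adj_iff, adj_none_left]
    exact fun h => hv (by rw [← h, φ.apply_symm_apply])
  rcases hφ : φ none with _ | ⟨i, a⟩
  · rfl
  obtain ⟨j, hj⟩ := Fintype.exists_ne_of_one_lt_card (by rw [Fintype.card_fin]; omega) i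
  have := hcenter (some (j, a)) (by simp [hφ, hj])
  simp [hφ, hj.symm] at this

theorem map_some_one (hn : 2 ≤ n) (φ : friendshipGraph n ≃g friendshipGraph n) {i : Fin n}
    (hi : φ (some (i, 0)) = some (i, 0)) : φ (some (i, 1)) = some (i, 1) := by
  have hadj : (friendshipGraph n).Adj (some (i, 0)) (φ (some (i, 1))) := by
    rw [← hi, φ.map_adj_iff, adj_some_some]
    simp
  rcases hφ : φ (some (i, 1)) with _ | ⟨j, b⟩
  · rw [← map_none hn φ] at hφ
    simp at hφ
  · rw [hφ, adj_some_some] at hadj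
    obtain ⟨rfl, hb⟩ := hadj
    obtain rfl : b = 1 := by fin_cases b <;> simp_all
    rfl

theorem eq_of_map_some_zero (hn : 2 ≤ n) (φ : friendshipGraph n ≃g friendshipGraph n)
    (h : ∀ i, φ (some (i, 0)) = some (i, 0)) : ∀ v, φ v = v := by
  rintro (_ | ⟨i, a⟩)
  · exact map_none hn φ
  · fin_cases a
    · exact h i
    · exact map_some_one hn φ (h i)

theorem card_image_some_mk (a : Fin n → Fin 2) :
    (Finset.univ.image fun i => (some (i, a i) : Option (Fin n × Fin 2))).card = n := by
  rw [Finset.card_image_of_injective _ fun _ _ h => (Prod.ext_iff.1 (Option.some_injective _ h)).1,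
    Finset.card_univ, Fintype.card_fin]

def outerVerticesZero (n : ℕ) : Finset (Option (Fin n × Fin 2)) :=
  Finset.univ.image fun i => some (i, 0)

theorem card_outerVerticesZero : (outerVerticesZero n).card = n :=
  card_image_some_mk fun _ => 0

theorem isDeterminingSet_outerVerticesZero (hn : 2 ≤ n) :
    IsDeterminingSet (friendshipGraph n) ↑(outerVerticesZero n) :=
  isDeterminingSet_iff_forall_fixes.2 fun φ hφ =>
    eq_of_map_some_zero hn φ fun i => hφ _ (by simp [outerVerticesZero])

theorem exists_mem_of_isDeterminingSet {S : Set (Option (Fin n × Fin 2))}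
    (hS : IsDeterminingSet (friendshipGraph n) S) (i : Fin n) : ∃ a, some (i, a) ∈ S := by
  obtain ⟨v, hvS, hv⟩ := hS.exists_mem_apply_ne (swapTriangle i)
    ⟨some (i, 0), by simp [swapTriangle_apply_zero]⟩
  rcases v with _ | ⟨j, a⟩
  · exact absurd (by simp [swapTriangle]) hv
  obtain rfl : j = i := by_contra fun h => hv (swapTriangle_apply_of_ne h a)
  exact ⟨a, hvS⟩

theorem le_card_of_isDeterminingSet {S : Finset (Option (Fin n × Fin 2))}
    (hS : IsDeterminingSet (friendshipGraph n) ↑S) : n ≤ S.card := by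
  choose a ha using exists_mem_of_isDeterminingSet hS
  calc n = (Finset.univ.image fun i => some (i, a i)).card := (card_image_some_mk a).symm
    _ ≤ S.card := Finset.card_le_card (by simpa [Finset.subset_iff] using ha)

end friendshipGraph

theorem stmt_12 (n : ℕ) (hn : 2 ≤ n) :
    detNum (friendshipGraph n) = n := by
  refine detNum_eq_of_isLeast ⟨⟨friendshipGraph.outerVerticesZero n,
    friendshipGraph.isDeterminingSet_outerVerticesZero hn,
    friendshipGraph.card_outerVerticesZero⟩, ?_⟩
  rintro _ ⟨S, hS, rfl⟩
  exact friendshipGraph.le_card_of_isDeterminingSet hS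
end
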